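/- arXiv:1002.0170 — 6 statements merged into one kernel-verified Lean document; each statement's English description precedes it below -/
import Mathlib

section
/- Let k ≥ 2 be an integer and let 0 < r < 1/(2k). Let X_2, …, X_k be k−1 i.i.d. uniform random points on the circle 𝕋¹ = ℝ/ℤ, and let 0 denote the zero element of 𝕋¹. Then the probability that dist(0, X_2) ≤ r, dist(X_j, X_{j+1}) ≤ r for all j = 2, …, k−1, and dist(X_k, 0) ≤ r equals r^{k−1} · Vol(H_{k−1}(1)). -/
open MeasureTheory ProbabilityTheory

/-- The polytope `H_{m+1}(r) ⊆ ℝ^{m+1}`: all `(x_1, …, x_{m+1})` with `|x_1| ≤ r`,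
`|x_{j+1} − x_j| ≤ r` for `j = 1, …, m`, and `|x_{m+1}| ≤ r`. -/
def Hpoly (m : ℕ) (r : ℝ) : Set (Fin (m + 1) → ℝ) :=
  {x | |x 0| ≤ r ∧ (∀ j : Fin m, |x j.succ - x j.castSucc| ≤ r) ∧ |x (Fin.last m)| ≤ r}

/-!
The joint law of `(X_2, …, X_k)` is the product of uniform measures, and the coordinatewise
projection from the box `(-1/2, 1/2]^{k-1}` is measure preserving onto it. A chain starting at `0`
whose steps have length at most `r` stays within distance `(k-1) r < 1/2 - r` of `0`, so on the
box a step of circle length at most `r` is a step of real length at most `r`: the preimage of the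
event in the box is exactly `H_{k-1}(r) = r • H_{k-1}(1)`, whose volume is
`r^{k-1} Vol(H_{k-1}(1))`.
-/

open Set Pointwise

namespace AddCircle

theorem dist_coe_le_dist {p : ℝ} (a b : ℝ) : dist (a : AddCircle p) b ≤ dist a b := by
  rw [dist_eq_norm, dist_eq_norm, ← coe_sub]
  exact QuotientAddGroup.norm_mk_le_norm

theorem dist_coe_le_iff {p a b r : ℝ} (hab : dist a b < p - r) :
    dist (a : AddCircle p) b ≤ r ↔ dist a b ≤ r := by
  refine ⟨fun h => ?_, (dist_coe_le_dist a b).trans⟩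
  rw [dist_eq_norm, ← coe_sub, norm_eq] at h
  rw [Real.dist_eq] at hab ⊢
  set n := round (p⁻¹ * (a - b))
  rcases eq_or_ne n 0 with hn | hn
  · simpa [hn] using h
  -- a nonzero multiple of the period is too far from `a - b`
  have hnp : p ≤ |n * p| := calc
    p ≤ |p| := le_abs_self p
    _ ≤ |(n : ℝ)| * |p| :=
      le_mul_of_one_le_left (abs_nonneg p) (by exact_mod_cast Int.one_le_abs hn)
    _ = |n * p| := (abs_mul _ _).symm
  have := abs_sub_abs_le_abs_sub (n * p) (a - b)
  rw [abs_sub_comm (↑n * p)] at this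
  linarith

end AddCircle

def loopChain {α : Type*} [PseudoMetricSpace α] (a : α) (m : ℕ) (r : ℝ) :
    Set (Fin (m + 1) → α) :=
  {y | dist a (y 0) ≤ r ∧ (∀ j : Fin m, dist (y j.castSucc) (y j.succ) ≤ r) ∧
    dist (y (Fin.last m)) a ≤ r}

theorem isClosed_loopChain {α : Type*} [PseudoMetricSpace α] (a : α) (m : ℕ) (r : ℝ) :
    IsClosed (loopChain a m r) := by
  refine .inter (isClosed_le (continuous_const.dist (continuous_apply 0)) continuous_const)
    (.inter ?_ (isClosed_le ((continuous_apply _).dist continuous_const) continuous_const))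
  change IsClosed {y : Fin (m + 1) → α | ∀ j : Fin m, dist (y j.castSucc) (y j.succ) ≤ r}
  rw [← iInter_ofPred]
  exact isClosed_iInter fun j => isClosed_le ((continuous_apply _).dist (continuous_apply _))
    continuous_const

theorem Hpoly_eq_loopChain (m : ℕ) (r : ℝ) : Hpoly m r = loopChain 0 m r := by
  ext x
  simp only [Hpoly, loopChain, mem_ofPred_eq, Real.dist_eq, zero_sub, abs_neg, sub_zero,
    abs_sub_comm (x (Fin.castSucc _))]

theorem norm_le_of_dist_succ_le {E : Type*} [SeminormedAddGroup E] {m : ℕ} {r : ℝ}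
    {y : Fin (m + 1) → E} (h0 : dist 0 (y 0) ≤ r)
    (hstep : ∀ j : Fin m, ‖y j.castSucc‖ ≤ ((j : ℕ) + 1 : ℝ) * r →
      dist (y j.castSucc) (y j.succ) ≤ r)
    (j : Fin (m + 1)) : ‖y j‖ ≤ ((j : ℕ) + 1 : ℝ) * r := by
  induction j using Fin.induction with
  | zero => simpa [dist_zero_left] using h0
  | succ j ih =>
    have := dist_triangle 0 (y j.castSucc) (y j.succ)
    have := hstep j ih
    simp only [dist_zero_left, Fin.val_succ, Fin.val_castSucc] at *
    push_cast
    linarith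

theorem smul_loopChain_zero {E : Type*} [SeminormedAddCommGroup E] [NormedSpace ℝ E]
    {c : ℝ} (hc : 0 < c) (m : ℕ) (r : ℝ) :
    c • loopChain (0 : E) m r = loopChain 0 m (c * r) := by
  ext x
  simp only [mem_smul_set_iff_inv_smul_mem₀ hc.ne', loopChain, mem_ofPred_eq, Pi.smul_apply,
    dist_zero_left, dist_zero_right, norm_smul, dist_smul₀, Real.norm_eq_abs, abs_inv,
    abs_of_pos hc, inv_mul_le_iff₀ hc]

theorem coe_preimage_loopChain_inter_pi_Ioc {p r : ℝ} {m : ℕ} (hr : (m + 2) * r < p / 2) :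
    (fun (x : Fin (m + 1) → ℝ) i => (x i : AddCircle p)) ⁻¹' loopChain 0 m r ∩
      univ.pi (fun _ => Ioc (-(p / 2)) (-(p / 2) + p)) = loopChain 0 m r := by
  ext x
  simp only [loopChain, mem_inter_iff, mem_preimage, mem_ofPred_eq, mem_univ_pi, mem_Ioc,
    ← AddCircle.coe_zero]
  constructor
  · rintro ⟨⟨h0, hstep, hlast⟩, hbox⟩
    have hr0 : 0 ≤ r := dist_nonneg.trans h0
    have hmr : (0 : ℝ) ≤ m * r := mul_nonneg m.cast_nonneg hr0
    have hbox' : ∀ i, |x i| ≤ p / 2 := fun i =>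
      abs_le.2 ⟨(hbox i).1.le, by linarith [(hbox i).2]⟩
    have dist_le_of_coe :
        ∀ a b : ℝ, |a| + |b| < p - r → dist (a : AddCircle p) b ≤ r → dist a b ≤ r :=
      fun a b hab => (AddCircle.dist_coe_le_iff (by linarith [abs_sub a b, Real.dist_eq a b])).1
    have h0' : dist 0 (x 0) ≤ r :=
      dist_le_of_coe _ _ (by linarith [hbox' 0, abs_zero (α := ℝ)]) h0
    have hstep' : ∀ j : Fin m, ‖x j.castSucc‖ ≤ ((j : ℕ) + 1 : ℝ) * r →
        dist (x j.castSucc) (x j.succ) ≤ r := fun j hj => by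
      have hjm : ((j : ℕ) + 1 : ℝ) ≤ m := by exact_mod_cast j.isLt
      refine dist_le_of_coe _ _ ?_ (hstep j)
      rw [Real.norm_eq_abs] at hj
      nlinarith [hbox' j.succ]
    have hlast' : ‖x (Fin.last m)‖ ≤ (m + 1) * r := by
      simpa using norm_le_of_dist_succ_le h0' hstep' (Fin.last m)
    refine ⟨h0', fun j => hstep' j (norm_le_of_dist_succ_le h0' hstep' _),
      dist_le_of_coe _ _ ?_ hlast⟩
    rw [Real.norm_eq_abs] at hlast'
    linarith [abs_zero (α := ℝ)]
  · rintro ⟨h0, hstep, hlast⟩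
    have hr0 : 0 ≤ r := dist_nonneg.trans h0
    refine ⟨⟨(AddCircle.dist_coe_le_dist _ _).trans h0,
      fun j => (AddCircle.dist_coe_le_dist _ _).trans (hstep j),
      (AddCircle.dist_coe_le_dist _ _).trans hlast⟩, fun i => ?_⟩
    have hi : ((i : ℕ) + 1 : ℝ) ≤ m + 1 := by exact_mod_cast Nat.succ_le_succ i.is_le
    have := norm_le_of_dist_succ_le h0 (fun j _ => hstep j) i
    rw [Real.norm_eq_abs, abs_le] at this
    constructor <;> nlinarith

theorem pi_volume_loopChain_addCircle {p r : ℝ} [Fact (0 < p)] {m : ℕ}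
    (hr : (m + 2) * r < p / 2) :
    Measure.pi (fun _ : Fin (m + 1) => (volume : Measure (AddCircle p))) (loopChain 0 m r) =
      volume (loopChain (0 : ℝ) m r) := by
  have hmp : MeasurePreserving (fun (x : Fin (m + 1) → ℝ) i => (x i : AddCircle p))
      (Measure.pi fun _ => volume.restrict (Ioc (-(p / 2)) (-(p / 2) + p)))
      (Measure.pi fun _ => volume) :=
    measurePreserving_pi _ _ fun _ => AddCircle.measurePreserving_mk p _
  have hmeas := (isClosed_loopChain (0 : AddCircle p) m r).measurableSet
  rw [← hmp.measure_preimage hmeas.nullMeasurableSet, ← Measure.restrict_pi_pi,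
    Measure.restrict_apply (hmeas.preimage hmp.measurable),
    coe_preimage_loopChain_inter_pi_Ioc hr, volume_pi]

/-- Let `k = m + 2 ≥ 2` and `0 < r < 1/(2k)`.  If `X_2, …, X_k` (here indexed by
`Fin (m + 1)`) are i.i.d. uniform points on the circle `𝕋¹ = ℝ/ℤ = AddCircle 1`,
then the probability that `dist(0, X_2) ≤ r`, `dist(X_j, X_{j+1}) ≤ r` for all
`j = 2, …, k − 1`, and `dist(X_k, 0) ≤ r` equals `r^(k-1) · Vol(H_{k-1}(1))`. -/
theorem prob_chain_eq_volume_Hpoly (m : ℕ) (r : ℝ) (hr : 0 < r)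
    (hr' : r < 1 / (2 * (m + 2)))
    {Ω : Type*} [MeasurableSpace Ω] (P : Measure Ω) [IsProbabilityMeasure P]
    (X : Fin (m + 1) → Ω → AddCircle (1 : ℝ))
    (hmeas : ∀ i, Measurable (X i))
    (hindep : iIndepFun X P)
    (hunif : ∀ i, P.map (X i) = (volume : Measure (AddCircle (1 : ℝ)))) :
    P {ω | dist (0 : AddCircle (1 : ℝ)) (X 0 ω) ≤ r ∧
        (∀ j : Fin m, dist (X j.castSucc ω) (X j.succ ω) ≤ r) ∧
        dist (X (Fin.last m) ω) (0 : AddCircle (1 : ℝ)) ≤ r}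
      = ENNReal.ofReal (r ^ (m + 1)) * volume (Hpoly m 1) := by
  have hr2 : ((m : ℝ) + 2) * r < 1 / 2 := by
    rw [lt_div_iff₀ (by positivity)] at hr'
    linarith
  have hlaw : P.map (fun ω i => X i ω) = Measure.pi fun _ => volume := by
    rw [hindep.map_fun_eq_pi_map fun i => (hmeas i).aemeasurable]
    simp only [hunif]
  calc _ = P.map (fun ω i => X i ω) (loopChain 0 m r) :=
        (Measure.map_apply (measurable_pi_lambda _ hmeas)
          (isClosed_loopChain 0 m r).measurableSet).symm
    _ = volume (r • loopChain (0 : ℝ) m 1) := by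
        rw [hlaw, pi_volume_loopChain_addCircle hr2, smul_loopChain_zero hr, mul_one]
    _ = _ := by
        rw [Measure.addHaar_smul_of_nonneg volume hr.le, Module.finrank_fin_fun,
          Hpoly_eq_loopChain]
end

section
/- The 4-dimensional Lebesgue volume of the polytope H_4(1) = {(x_1, x_2, x_3, x_4) ∈ ℝ⁴ : |x_1| ≤ 1, |x_{j+1} − x_j| ≤ 1 for j = 1, 2, 3, |x_4| ≤ 1} equals 115/12. -/
/-!
Write `x₀ = 0`, so that `|x₁| ≤ 1` reads `|x₁ - x₀| ≤ 1`. For `j = 0, …, 3` let `Cⱼ(x)` be the set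
of admissible tails `(x_{j+1}, …, x₄)` given `xⱼ = x`; the polytope is `C₀(0)`. By Fubini,
`Cⱼ(x)` is the union over `x_{j+1} ∈ [x - 1, x + 1]` of `{x_{j+1}} × C_{j+1}(x_{j+1})`, so fibre
volumes are propagated by the window operator `g ↦ (x ↦ ∫_{x-1}^{x+1} g)`. The last fibre
`C₃(x) = [x - 1, x + 1] ∩ [-1, 1]` has length `max (2 - |x|) 0`; one window turns this tent into
`3 - b²` on `[-1, 1]` and `(3 - b)² / 2` on `[1, 3]`, the next into `16/3 - 2a² + |a|³/2` on
`[-1, 1]`, whose integral over `[-1, 1]` is `115/12`.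
-/

open MeasureTheory Set intervalIntegral

noncomputable def windowIntegral (r : ℝ) (g : ℝ → ℝ) (x : ℝ) : ℝ := ∫ t in (x - r)..(x + r), g t

section windowIntegral

variable {r : ℝ} {g : ℝ → ℝ}

theorem windowIntegral_eq_integral_comp_add (x : ℝ) :
    windowIntegral r g x = ∫ t in (-r)..r, g (x + t) := by
  rw [integral_comp_add_left, windowIntegral, sub_eq_add_neg]

theorem continuous_windowIntegral (hg : Continuous g) : Continuous (windowIntegral r g) := by
  simp only [funext windowIntegral_eq_integral_comp_add]
  fun_prop

theorem windowIntegral_nonneg (hr : 0 ≤ r) (hg : ∀ t, 0 ≤ g t) (x : ℝ) :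
    0 ≤ windowIntegral r g x :=
  integral_nonneg (by linarith) fun t _ => hg t

theorem Function.Even.windowIntegral (hg : g.Even) : (windowIntegral r g).Even := by
  intro x
  have : (fun t => g t) = fun t => g (-t) := funext fun t => (hg t).symm
  rw [_root_.windowIntegral, this, integral_comp_neg, _root_.windowIntegral]
  ring_nf

theorem windowIntegral_eq_add (hg : Continuous g) (x m : ℝ) :
    windowIntegral r g x = (∫ t in (x - r)..m, g t) + ∫ t in m..(x + r), g t :=
  (integral_add_adjacent_intervals (hg.intervalIntegrable _ _) (hg.intervalIntegrable _ _)).symm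

end windowIntegral

theorem Function.Even.intervalIntegral_neg_eq_two_mul {g : ℝ → ℝ} (hg : g.Even)
    (hc : Continuous g) (a : ℝ) :
    ∫ x in (-a)..a, g x = 2 * ∫ x in (0 : ℝ)..a, g x := by
  have hleft : ∫ x in (-a)..0, g x = ∫ x in (0 : ℝ)..a, g x := by
    simpa [hg.eq] using (integral_comp_neg (a := 0) (b := a) g).symm
  rw [← integral_add_adjacent_intervals (hc.intervalIntegrable _ 0) (hc.intervalIntegrable 0 _),
    hleft, two_mul]

theorem integral_cubic (k₀ k₁ k₂ k₃ p q : ℝ) :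
    ∫ x in p..q, (k₀ + k₁ * x + k₂ * x ^ 2 + k₃ * x ^ 3) =
      (k₀ * q + k₁ * q ^ 2 / 2 + k₂ * q ^ 3 / 3 + k₃ * q ^ 4 / 4) -
        (k₀ * p + k₁ * p ^ 2 / 2 + k₂ * p ^ 3 / 3 + k₃ * p ^ 4 / 4) := by
  simp (disch := exact (Continuous.intervalIntegrable (by fun_prop) _ _)) only
    [intervalIntegral.integral_add, intervalIntegral.integral_const_mul, integral_pow,
      intervalIntegral.integral_const, smul_eq_mul]
  rw [intervalIntegral.integral_const_mul, integral_id]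
  ring

theorem integral_eq_of_eqOn_cubic {g : ℝ → ℝ} {p q : ℝ} (hpq : p ≤ q) (k₀ k₁ k₂ k₃ : ℝ)
    (hg : ∀ x ∈ Icc p q, g x = k₀ + k₁ * x + k₂ * x ^ 2 + k₃ * x ^ 3) :
    ∫ x in p..q, g x =
      (k₀ * q + k₁ * q ^ 2 / 2 + k₂ * q ^ 3 / 3 + k₃ * q ^ 4 / 4) -
        (k₀ * p + k₁ * p ^ 2 / 2 + k₂ * p ^ 3 / 3 + k₃ * p ^ 4 / 4) := by
  rw [integral_congr fun x hx => hg x (by rwa [uIcc_of_le hpq] at hx), integral_cubic]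
theorem lintegral_Icc_ofReal {g : ℝ → ℝ} (hg : Continuous g) (hg₀ : ∀ x, 0 ≤ g x) {p q : ℝ}
    (hpq : p ≤ q) :
    ∫⁻ x in Icc p q, ENNReal.ofReal (g x) = ENNReal.ofReal (∫ x in p..q, g x) := by
  rw [← Measure.restrict_congr_set Ioc_ae_eq_Icc, integral_of_le hpq,
    ofReal_integral_eq_lintegral_ofReal hg.integrableOn_Ioc (ae_of_all _ hg₀)]

section Fibers

variable {E : Type*} [MeasureSpace E]

def chainStep (r : ℝ) (S : ℝ → Set E) (x : ℝ) : Set (ℝ × E) :=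
  {p | p.1 ∈ Icc (x - r) (x + r) ∧ p.2 ∈ S p.1}

structure HasFiberVolume (S : ℝ → Set E) (g : ℝ → ℝ) : Prop where
  measurableSet_graph : MeasurableSet {p : ℝ × E | p.2 ∈ S p.1}
  continuous : Continuous g
  nonneg : ∀ y, 0 ≤ g y
  volume_eq : ∀ y, volume (S y) = ENNReal.ofReal (g y)

variable {r : ℝ} {S : ℝ → Set E} {g : ℝ → ℝ}

theorem measurableSet_chainStep (hS : MeasurableSet {p : ℝ × E | p.2 ∈ S p.1}) (x : ℝ) :
    MeasurableSet (chainStep r S x) :=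
  (measurableSet_Icc.preimage measurable_fst).inter hS

theorem volume_chainStep [SFinite (volume : Measure E)] (hr : 0 ≤ r) (hS : HasFiberVolume S g)
    (x : ℝ) :
    volume (chainStep r S x) = ENNReal.ofReal (windowIntegral r g x) := by
  have hfiber : ∀ y, volume (Prod.mk y ⁻¹' chainStep r S x) =
      (Icc (x - r) (x + r)).indicator (fun y => ENNReal.ofReal (g y)) y := by
    intro y
    by_cases hy : y ∈ Icc (x - r) (x + r)
    · rw [indicator_of_mem hy, ← hS.volume_eq]
      congr 1
      simp only [chainStep, preimage_ofPred_eq, hy, true_and]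
      rfl
    · rw [indicator_of_notMem hy, ← measure_empty (μ := (volume : Measure E))]
      congr 1
      simp only [chainStep, preimage_ofPred_eq, hy, false_and]
      rfl
  rw [Measure.volume_eq_prod,
    Measure.prod_apply (measurableSet_chainStep hS.measurableSet_graph x), lintegral_congr hfiber,
    lintegral_indicator measurableSet_Icc,
    lintegral_Icc_ofReal hS.continuous hS.nonneg (by linarith), windowIntegral]

theorem HasFiberVolume.chainStep [SFinite (volume : Measure E)] (hr : 0 ≤ r)
    (hS : HasFiberVolume S g) :
    HasFiberVolume (chainStep r S) (windowIntegral r g) where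
  measurableSet_graph := by
    simp only [_root_.chainStep, mem_Icc, ofPred_and]
    exact ((measurableSet_le (by fun_prop) (by fun_prop)).inter
      (measurableSet_le (by fun_prop) (by fun_prop))).inter
      (hS.measurableSet_graph.preimage measurable_snd)
  continuous := continuous_windowIntegral hS.continuous
  nonneg := windowIntegral_nonneg hr hS.nonneg
  volume_eq := volume_chainStep hr hS

end Fibers

noncomputable def tent (c : ℝ) : ℝ := max (2 - |c|) 0

theorem continuous_tent : Continuous tent := by
  unfold tent
  fun_prop

theorem even_tent : tent.Even := fun c => by rw [tent, tent, abs_neg]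

theorem tent_of_abs_le {c : ℝ} (h : |c| ≤ 2) : tent c = 2 - |c| := max_eq_left (by linarith)

theorem tent_of_two_le_abs {c : ℝ} (h : 2 ≤ |c|) : tent c = 0 := max_eq_right (by linarith)

theorem hasFiberVolume_tent :
    HasFiberVolume (fun c => Icc (c - 1) (c + 1) ∩ Icc (-1) 1) tent where
  measurableSet_graph := by
    simp only [mem_inter_iff, mem_Icc, ofPred_and]
    exact (((measurableSet_le (by fun_prop) (by fun_prop)).inter
      (measurableSet_le (by fun_prop) (by fun_prop))).inter
      ((measurableSet_le (by fun_prop) (by fun_prop)).inter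
      (measurableSet_le (by fun_prop) (by fun_prop))))
  continuous := continuous_tent
  nonneg _ := le_max_right _ _
  volume_eq c := by
    have hlen : min (c + 1) 1 - max (c - 1) (-1) = 2 - |c| := by
      rcases le_total 0 c with hc | hc
      · rw [abs_of_nonneg hc, min_eq_right (by linarith), max_eq_left (by linarith)]; ring
      · rw [abs_of_nonpos hc, min_eq_left (by linarith), max_eq_right (by linarith)]; ring
    rw [Icc_inter_Icc, Real.volume_Icc, tent, ENNReal.ofReal_max, ENNReal.ofReal_zero,
      max_eq_left zero_le, hlen]

theorem windowIntegral_tent_of_abs_le_one {b : ℝ} (hb : |b| ≤ 1) :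
    windowIntegral 1 tent b = 3 - b ^ 2 := by
  obtain ⟨hb₁, hb₂⟩ := abs_le.mp hb
  rw [windowIntegral_eq_add continuous_tent b 0,
    integral_eq_of_eqOn_cubic (by linarith) 2 1 0 0 fun c hc => ?_,
    integral_eq_of_eqOn_cubic (by linarith) 2 (-1) 0 0 fun c hc => ?_]
  · ring
  · have hc' : |c| = c := abs_of_nonneg hc.1
    rw [tent_of_abs_le (by linarith [hc.2]), hc']
    ring
  · have hc' : |c| = -c := abs_of_nonpos hc.2
    rw [tent_of_abs_le (by linarith [hc.1]), hc']
    ring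

theorem windowIntegral_tent_of_one_le_of_le_three {b : ℝ} (hb₁ : 1 ≤ b) (hb₃ : b ≤ 3) :
    windowIntegral 1 tent b = (3 - b) ^ 2 / 2 := by
  rw [windowIntegral_eq_add continuous_tent b 2,
    integral_eq_of_eqOn_cubic (by linarith) 2 (-1) 0 0 fun c hc => ?_,
    integral_eq_of_eqOn_cubic (by linarith) 0 0 0 0 fun c hc => ?_]
  · ring
  · rw [tent_of_two_le_abs (le_abs.mpr (Or.inl hc.1))]
    ring
  · have hc' : |c| = c := abs_of_nonneg (by linarith [hc.1])
    rw [tent_of_abs_le (by linarith [hc.2]), hc']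
    ring

theorem windowIntegral_windowIntegral_tent {a : ℝ} (ha₀ : 0 ≤ a) (ha₁ : a ≤ 1) :
    windowIntegral 1 (windowIntegral 1 tent) a = 16 / 3 - 2 * a ^ 2 + a ^ 3 / 2 := by
  rw [windowIntegral_eq_add (continuous_windowIntegral continuous_tent) a 1,
    integral_eq_of_eqOn_cubic (by linarith) 3 0 (-1) 0 fun b hb => ?_,
    integral_eq_of_eqOn_cubic (by linarith) (9 / 2) (-3) (1 / 2) 0 fun b hb => ?_]
  · ring
  · rw [windowIntegral_tent_of_one_le_of_le_three hb.1 (by linarith [hb.2])]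
    ring
  · rw [windowIntegral_tent_of_abs_le_one (abs_le.mpr ⟨by linarith [hb.1], hb.2⟩)]
    ring

theorem windowIntegral_windowIntegral_windowIntegral_tent_zero :
    windowIntegral 1 (windowIntegral 1 (windowIntegral 1 tent)) 0 = 115 / 12 := by
  have hcont : Continuous (windowIntegral 1 (windowIntegral 1 tent)) :=
    continuous_windowIntegral (continuous_windowIntegral continuous_tent)
  rw [windowIntegral, zero_sub, zero_add,
    even_tent.windowIntegral.windowIntegral.intervalIntegral_neg_eq_two_mul hcont,
    integral_eq_of_eqOn_cubic zero_le_one (16 / 3) 0 (-2) (1 / 2) fun a ha => ?_]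
  · norm_num
  · rw [windowIntegral_windowIntegral_tent ha.1 ha.2]
    ring

theorem measurePreserving_finFourArrow :
    MeasurePreserving (fun x : Fin 4 → ℝ => (x 0, x 1, x 2, x 3)) :=
  ((MeasurePreserving.id volume).prod
      ((MeasurePreserving.id volume).prod (volume_preserving_finTwoArrow ℝ))).comp
    (((MeasurePreserving.id volume).prod
        (volume_preserving_piFinSuccAbove (fun _ : Fin 3 => ℝ) 0)).comp
      (volume_preserving_piFinSuccAbove (fun _ : Fin 4 => ℝ) 0))

/-- The volume of the polytope
`H_4(1) = {(x₁, x₂, x₃, x₄) ∈ ℝ⁴ : |x₁| ≤ 1, |x_{j+1} − x_j| ≤ 1 (j = 1,2,3), |x₄| ≤ 1}`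
equals `115/12`. -/
theorem volume_H4_one :
    volume {x : Fin 4 → ℝ |
        |x 0| ≤ 1 ∧ |x 1 - x 0| ≤ 1 ∧ |x 2 - x 1| ≤ 1 ∧ |x 3 - x 2| ≤ 1 ∧ |x 3| ≤ 1}
      = 115 / 12 := by
  have h₂ := (hasFiberVolume_tent.chainStep zero_le_one).chainStep zero_le_one
  have hH : {x : Fin 4 → ℝ |
        |x 0| ≤ 1 ∧ |x 1 - x 0| ≤ 1 ∧ |x 2 - x 1| ≤ 1 ∧ |x 3 - x 2| ≤ 1 ∧ |x 3| ≤ 1} =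
      (fun x : Fin 4 → ℝ => (x 0, x 1, x 2, x 3)) ⁻¹'
        chainStep 1 (chainStep 1 (chainStep 1 fun c => Icc (c - 1) (c + 1) ∩ Icc (-1) 1)) 0 := by
    ext x
    simp only [chainStep, mem_ofPred_eq, mem_preimage, mem_Icc, mem_inter_iff, abs_le]
    constructor <;> intro h <;> refine ⟨?_, ?_, ?_, ?_⟩ <;> grind
  rw [hH, measurePreserving_finFourArrow.measure_preimage
      (measurableSet_chainStep h₂.measurableSet_graph 0).nullMeasurableSet,
    (h₂.chainStep zero_le_one).volume_eq, windowIntegral_windowIntegral_windowIntegral_tent_zero,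
    ENNReal.ofReal_div_of_pos (by norm_num)]
  norm_num
end

section
/- The 5-dimensional Lebesgue volume of the polytope H_5(1) = {(x_1, …, x_5) ∈ ℝ⁵ : |x_1| ≤ 1, |x_{j+1} − x_j| ≤ 1 for j = 1, …, 4, |x_5| ≤ 1} equals 88/5. -/
/-!
Let `V_n(a)` be the volume of the set of `y ∈ ℝⁿ` with `|y₁ - a| ≤ r`, `|y_{i+1} - y_i| ≤ r` and
`|y_n| ≤ r`, so that `Vol H_5(1) = V_5(0)` at `r = 1`. Slicing off the first coordinate gives
`V_{n+1}(a) = ∫_{a-r}^{a+r} V_n(b) db`, so `V_n` is the `(n + 1)`-fold convolution power of the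
indicator of `[-r, r]`, a central B-spline. In truncated-power form it is an iterated forward
difference (step `2r`) of `x ↦ x ^ (n - 1) * |x|`; integration over a window of width `2r`
commutes with forward differences and takes `x ^ n * |x|` to `x ^ (n + 1) * |x| / (n + 2)`, so
this form is preserved by the recursion. For `V_5(0)` at `r = 1` it gives
`(2·6⁵ − 12·4⁵ + 30·2⁵) / 240 = 88/5`.
-/

open MeasureTheory Set fwdDiff Topology Asymptotics

theorem hasDerivAt_pow_succ_mul_abs (n : ℕ) (x : ℝ) :
    HasDerivAt (fun s : ℝ => s ^ (n + 1) * |s|) ((n + 2) * (x ^ n * |x|)) x := by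
  rcases eq_or_ne x 0 with rfl | hx
  · have hlittleO : (fun s : ℝ => s ^ (n + 1) * |s|) =o[𝓝 0] fun s => s := by
      rw [← isLittleO_norm_left]
      have := (isLittleO_pow_id (𝕜 := ℝ) (n := n + 2) (by omega)).norm_left
      simpa [norm_mul, ← pow_succ] using this
    simpa [hasDerivAt_iff_isLittleO] using hlittleO
  · refine ((hasDerivAt_pow (n + 1) x).mul (hasDerivAt_abs hx)).congr_deriv ?_
    rw [← self_mul_sign x]
    push_cast
    ring

theorem integral_pow_mul_abs (n : ℕ) (a b : ℝ) :
    ∫ s in a..b, s ^ n * |s| = (b ^ (n + 1) * |b| - a ^ (n + 1) * |a|) / (n + 2) := by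
  have hderiv (x : ℝ) :
      HasDerivAt (fun s : ℝ => s ^ (n + 1) * |s| / (n + 2)) (x ^ n * |x|) x :=
    ((hasDerivAt_pow_succ_mul_abs n x).div_const _).congr_deriv (by field_simp)
  rw [intervalIntegral.integral_eq_sub_of_hasDerivAt (fun x _ => hderiv x)
    (by apply Continuous.intervalIntegrable; fun_prop)]
  ring

section Window

variable {E : Type*} [NormedAddCommGroup E] [NormedSpace ℝ E] {f : ℝ → E}

theorem integral_fwdDiff (hf : Continuous f) (h r t : ℝ) :
    ∫ s in t - r..t + r, Δ_[h] f s = Δ_[h] (fun x => ∫ s in x - r..x + r, f s) t := by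
  have hshift : Continuous fun s => f (s + h) := hf.comp (continuous_add_const h)
  simp only [fwdDiff]
  rw [intervalIntegral.integral_sub (hshift.intervalIntegrable _ _) (hf.intervalIntegrable _ _),
    intervalIntegral.integral_comp_add_right (fun s => f s)]
  ring_nf

theorem integral_fwdDiff_iter (hf : Continuous f) (h r : ℝ) (N : ℕ) (t : ℝ) :
    ∫ s in t - r..t + r, (Δ_[h])^[N] f s = (Δ_[h])^[N] (fun x => ∫ s in x - r..x + r, f s) t := by
  induction N generalizing f with
  | zero => rfl
  | succ N ih =>
    have hΔ : Continuous (Δ_[h] f) := (hf.comp (continuous_add_const h)).sub hf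
    simp only [Function.iterate_succ_apply]
    rw [ih hΔ, funext (integral_fwdDiff hf h r)]

end Window

/-- `chainSet r n a` is the set of `y : Fin n → ℝ` with `|y 0 - a| ≤ r`, `|y (i + 1) - y i| ≤ r`
and `|y (n - 1)| ≤ r` (for `n = 0`: all of `ℝ⁰` if `|a| ≤ r`, else `∅`), so that
`H_k(r) = chainSet r k 0`. -/
def chainSet (r : ℝ) : (n : ℕ) → ℝ → Set (Fin n → ℝ)
  | 0, a => {_y | |a| ≤ r}
  | n + 1, a => {y | |y 0 - a| ≤ r ∧ Fin.tail y ∈ chainSet r n (y 0)}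

theorem measurableSet_chainSet (r : ℝ) (n : ℕ) :
    MeasurableSet {p : ℝ × (Fin n → ℝ) | p.2 ∈ chainSet r n p.1} := by
  induction n with
  | zero =>
    exact measurableSet_le (by fun_prop : Measurable fun p : ℝ × (Fin 0 → ℝ) => |p.1|)
      measurable_const
  | succ n ih =>
    have hcons : Measurable fun p : ℝ × (Fin (n + 1) → ℝ) => (p.2 0, Fin.tail p.2) :=
      (measurable_pi_apply 0).comp measurable_snd |>.prodMk
        (measurable_pi_lambda _ fun i => (measurable_pi_apply i.succ).comp measurable_snd)
    exact (measurableSet_le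
      (by fun_prop : Measurable fun p : ℝ × (Fin (n + 1) → ℝ) => |p.2 0 - p.1|)
      measurable_const).inter (ih.preimage hcons)

theorem volume_eq_lintegral_volume_setOf_cons_mem {α : Type*} [MeasureSpace α]
    [SigmaFinite (volume : Measure α)] {n : ℕ} {S : Set (Fin (n + 1) → α)}
    (hS : MeasurableSet S) :
    volume S = ∫⁻ a, volume {y : Fin n → α | Fin.cons a y ∈ S} := by
  have e := (volume_preserving_piFinSuccAbove (fun _ : Fin (n + 1) => α) 0).symm
  rw [← e.measure_preimage hS.nullMeasurableSet, Measure.volume_eq_prod,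
    Measure.prod_apply (hS.preimage e.measurable)]
  simp only [MeasurableEquiv.piFinSuccAbove, Fin.insertNthEquiv_zero]
  rfl

theorem volume_chainSet_succ (r : ℝ) (n : ℕ) (a : ℝ) :
    volume (chainSet r (n + 1) a) = ∫⁻ b in Icc (a - r) (a + r), volume (chainSet r n b) := by
  have hS : MeasurableSet (chainSet r (n + 1) a) :=
    (measurableSet_chainSet r (n + 1)).preimage measurable_prodMk_left
  rw [volume_eq_lintegral_volume_setOf_cons_mem hS, ← lintegral_indicator measurableSet_Icc]
  refine lintegral_congr fun b => ?_
  by_cases hb : |b - a| ≤ r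
  · rw [indicator_of_mem (by rwa [abs_sub_comm, mem_Icc_iff_abs_le] at hb)]
    congr 1
    ext y
    simp [chainSet, hb]
  · rw [indicator_of_notMem (by rwa [abs_sub_comm, mem_Icc_iff_abs_le] at hb)]
    convert measure_empty (μ := volume)
    ext y
    simp [chainSet, hb]

/-- For `0 ≤ r`, the `(n + 2)`-fold convolution power of the indicator of `[-r, r]`. Since
`x ^ n * |x| = 2 * max x 0 ^ (n + 1) - x ^ (n + 1)` and the `(n + 2)`-nd difference kills
polynomials of degree `n + 1`, this is the usual truncated-power formula for a B-spline. -/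
noncomputable def boxSpline (r : ℝ) (n : ℕ) (t : ℝ) : ℝ :=
  (Δ_[2 * r])^[n + 2] (fun x => (x - (n + 2) * r) ^ n * |x - (n + 2) * r|) t /
    (2 * (n + 1).factorial)

theorem continuous_boxSpline (r : ℝ) (n : ℕ) : Continuous (boxSpline r n) := by
  unfold boxSpline
  simp_rw [fwdDiff_iter_eq_sum_shift]
  fun_prop

theorem boxSpline_zero (r t : ℝ) :
    boxSpline r 0 t = (|t + 2 * r| - 2 * |t| + |t - 2 * r|) / 2 := by
  simp only [boxSpline, fwdDiff, Function.iterate_succ, Function.iterate_zero,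
    Function.comp_apply, id, pow_zero, one_mul]
  push_cast
  ring_nf

theorem integral_boxSpline (r : ℝ) (n : ℕ) (t : ℝ) :
    ∫ s in t - r..t + r, boxSpline r n s = boxSpline r (n + 1) t := by
  have hwindow : (fun x => ∫ s in x - r..x + r, (s - (n + 2) * r) ^ n * |s - (n + 2) * r|) =
      ((n : ℝ) + 2)⁻¹ • Δ_[2 * r] (fun x => (x - (n + 3) * r) ^ (n + 1) * |x - (n + 3) * r|) := by
    ext x
    rw [intervalIntegral.integral_comp_sub_right (fun s => s ^ n * |s|), integral_pow_mul_abs]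
    simp only [fwdDiff, Pi.smul_apply, smul_eq_mul]
    ring_nf
  unfold boxSpline
  rw [intervalIntegral.integral_div, integral_fwdDiff_iter (by fun_prop), hwindow,
    fwdDiff_iter_const_smul, Pi.smul_apply, smul_eq_mul, ← Function.iterate_succ_apply]
  have hcast : ((n + 1 : ℕ) : ℝ) + 2 = n + 3 := by push_cast; ring
  rw [hcast, Nat.factorial_succ (n + 1)]
  push_cast
  field_simp
  ring

theorem boxSpline_nonneg {r : ℝ} (hr : 0 ≤ r) (n : ℕ) (t : ℝ) : 0 ≤ boxSpline r n t := by
  induction n generalizing t with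
  | zero =>
    have htriangle := abs_add_le (t + 2 * r) (t - 2 * r)
    rw [show t + 2 * r + (t - 2 * r) = 2 * t by ring, abs_mul, abs_two] at htriangle
    rw [boxSpline_zero]
    linarith
  | succ n ih =>
    rw [← integral_boxSpline]
    exact intervalIntegral.integral_nonneg (by linarith) fun s _ => ih s

theorem volume_chainSet_one {r : ℝ} (hr : 0 ≤ r) (a : ℝ) :
    volume (chainSet r 1 a) = ENNReal.ofReal (boxSpline r 0 a) := by
  have hbox (b : ℝ) : volume (chainSet r 0 b) = (Icc (-r) r).indicator 1 b := by
    by_cases hb : |b| ≤ r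
    · rw [indicator_of_mem (show b ∈ Icc (-r) r from abs_le.1 hb)]
      simp [chainSet, hb, volume_pi]
    · rw [indicator_of_notMem (show b ∉ Icc (-r) r from mt abs_le.2 hb)]
      simp [chainSet, hb]
  have hlength : boxSpline r 0 a = max (min r (a + r) - max (-r) (a - r)) 0 := by
    rw [boxSpline_zero]
    simp only [abs_eq_max_neg, min_def, max_def]
    split_ifs <;> linarith
  rw [volume_chainSet_succ, lintegral_congr hbox, lintegral_indicator_one measurableSet_Icc,
    Measure.restrict_apply measurableSet_Icc, Icc_inter_Icc, Real.volume_Icc, hlength,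
    ENNReal.ofReal_max, ENNReal.ofReal_zero, max_eq_left zero_le]

theorem volume_chainSet {r : ℝ} (hr : 0 ≤ r) (n : ℕ) (a : ℝ) :
    volume (chainSet r (n + 1) a) = ENNReal.ofReal (boxSpline r n a) := by
  induction n generalizing a with
  | zero => exact volume_chainSet_one hr a
  | succ n ih =>
    rw [volume_chainSet_succ, setLIntegral_congr_fun measurableSet_Icc fun b _ => ih b,
      ← ofReal_integral_eq_lintegral_ofReal (continuous_boxSpline r n).integrableOn_Icc
        (.of_forall (boxSpline_nonneg hr n)),
      integral_Icc_eq_integral_Ioc, ← intervalIntegral.integral_of_le (by linarith),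
      integral_boxSpline]

/-- The volume of the polytope
`H_5(1) = {(x₁, …, x₅) ∈ ℝ⁵ : |x₁| ≤ 1, |x_{j+1} − x_j| ≤ 1 (j = 1,…,4), |x₅| ≤ 1}`
equals `88/5`. -/
theorem volume_H5_one :
    volume {x : Fin 5 → ℝ |
        |x 0| ≤ 1 ∧ |x 1 - x 0| ≤ 1 ∧ |x 2 - x 1| ≤ 1 ∧ |x 3 - x 2| ≤ 1 ∧
          |x 4 - x 3| ≤ 1 ∧ |x 4| ≤ 1} = 88 / 5 := by
  have hvalue : boxSpline 1 4 0 = 88 / 5 := by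
    norm_num [boxSpline, fwdDiff_iter_eq_sum_shift, Finset.sum_range_succ, Nat.factorial,
      Nat.choose]
  convert volume_chainSet zero_le_one 4 0 using 1
  · congr 1
    ext x
    simp [chainSet, Fin.tail]
  · rw [hvalue, ENNReal.ofReal_div_of_pos (by norm_num)]
    norm_num
end

section
/- Let 0 < r < 1/4, let n ≥ 3, and let X_1, …, X_n be i.i.d. uniform random points on the circle 𝕋¹ = ℝ/ℤ. Let A be the (random) adjacency matrix of the random geometric graph G(X; r). Then E[trace(A³)] = 3r² · n(n−1)(n−2); equivalently, the expected third spectral moment E[(1/n) Σ_i λ_i(A)³] equals 3r²(n−1)(n−2). -/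
open MeasureTheory ProbabilityTheory
open scoped Classical

/-!
Expanding the trace, `trace (A³) = ∑ A_ij A_jk A_ki`, and a summand is nonzero exactly when
`i, j, k` are distinct and the three points are pairwise within distance `r`. For distinct indices
the triple `(X_i, X_j, X_k)` is uniform on `𝕋³`; by translation invariance the probability of the
triangle event is the area of `{(y, z) : |y| ≤ r, |z| ≤ r, |y - z| ≤ r}`, a hexagon of area `3r²`
(since `2r < 1/2`, the circle metric agrees with `|·|` on it). Summing over the `n(n-1)(n-2)`
ordered triples of distinct indices gives the result.
-/

open Set

lemma Matrix.trace_pow_three {ι R : Type*} [Fintype ι] [DecidableEq ι] [Semiring R]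
    (A : Matrix ι ι R) : (A ^ 3).trace = ∑ i, ∑ j, ∑ k, A i j * A j k * A k i := by
  simp [pow_three, Matrix.trace, Matrix.mul_apply, Finset.mul_sum, mul_assoc]

open Finset in
lemma sum_sum_sum_ite_pairwise_ne {α : Type*} [Fintype α] [DecidableEq α] (c : ℝ) :
    ∑ i : α, ∑ j : α, ∑ k : α, (if i ≠ j ∧ j ≠ k ∧ k ≠ i then c else 0)
      = c * Fintype.card α * (Fintype.card α - 1) * (Fintype.card α - 2) := by
  have inner (i j : α) : ∑ k : α, (if i ≠ j ∧ j ≠ k ∧ k ≠ i then c else 0)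
      = if i ≠ j then c * (Fintype.card α - 2) else 0 := by
    split_ifs with hij
    · have hfilter : ({k | i ≠ j ∧ j ≠ k ∧ k ≠ i} : Finset α) = {i, j}ᶜ := by
        ext k; simp [hij, eq_comm, and_comm]
      have h2 : 2 ≤ Fintype.card α := (card_pair hij).symm.trans_le (card_le_univ _)
      rw [← sum_filter, sum_const, hfilter, card_compl, card_pair hij, nsmul_eq_mul,
        Nat.cast_sub h2]
      ring
    · simp [hij]
  have mid (i : α) : ∑ j : α, (if i ≠ j then c * (Fintype.card α - 2) else 0) =
      c * (Fintype.card α - 1) * (Fintype.card α - 2) := by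
    have : Nonempty α := ⟨i⟩
    rw [← sum_filter, sum_const, filter_ne, card_erase_of_mem (mem_univ i), card_univ,
      nsmul_eq_mul, Nat.cast_sub Fintype.card_pos]
    ring
  simp only [inner, mid, sum_const, card_univ, nsmul_eq_mul]
  ring

lemma integral_trace_pow_three {Ω ι : Type*} [MeasurableSpace Ω] {P : Measure Ω} [Fintype ι]
    [DecidableEq ι] (M : Ω → Matrix ι ι ℝ)
    (hM : ∀ i j k, Integrable (fun ω => M ω i j * M ω j k * M ω k i) P) :
    ∫ ω, (M ω ^ 3).trace ∂P = ∑ i, ∑ j, ∑ k, ∫ ω, M ω i j * M ω j k * M ω k i ∂P := by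
  simp only [Matrix.trace_pow_three]
  rw [integral_finsetSum _ fun i _ => integrable_finsetSum _ fun j _ =>
    integrable_finsetSum _ fun k _ => hM i j k]
  refine Finset.sum_congr rfl fun i _ => ?_
  rw [integral_finsetSum _ fun j _ => integrable_finsetSum _ fun k _ => hM i j k]
  exact Finset.sum_congr rfl fun j _ => integral_finsetSum _ fun k _ => hM i j k

section GeometricGraph

variable {ι E : Type*} [PseudoMetricSpace E]

noncomputable def rggAdjMatrix [DecidableEq ι] (r : ℝ) (x : ι → E) : Matrix ι ι ℝ :=
  Matrix.of fun i j => if i ≠ j ∧ dist (x i) (x j) ≤ r then 1 else 0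

def closeTriples (r : ℝ) : Set (E × E × E) :=
  {p | dist p.1 p.2.1 ≤ r ∧ dist p.2.1 p.2.2 ≤ r ∧ dist p.2.2 p.1 ≤ r}

lemma isClosed_closeTriples (r : ℝ) : IsClosed (closeTriples (E := E) r) :=
  (isClosed_le (continuous_fst.dist continuous_snd.fst) continuous_const).inter
    ((isClosed_le (continuous_snd.fst.dist continuous_snd.snd) continuous_const).inter
      (isClosed_le (continuous_snd.snd.dist continuous_fst) continuous_const))

lemma rggAdjMatrix_mul_mul_apply [DecidableEq ι] (r : ℝ) (x : ι → E) (i j k : ι) :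
    rggAdjMatrix r x i j * rggAdjMatrix r x j k * rggAdjMatrix r x k i =
      if i ≠ j ∧ j ≠ k ∧ k ≠ i then (closeTriples r).indicator 1 (x i, x j, x k) else 0 := by
  simp only [rggAdjMatrix, closeTriples, Matrix.of_apply, indicator, mem_ofPred_eq, Pi.one_apply]
  split_ifs <;> simp_all [not_le_of_gt]

lemma preimage_mk_closeTriples {G : Type*} [SeminormedAddCommGroup G] (r : ℝ) (x : G) :
    Prod.mk x ⁻¹' closeTriples r
      = (fun p : G × G => (p.1 - x, p.2 - x)) ⁻¹' (Prod.mk 0 ⁻¹' closeTriples r) := by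
  ext ⟨y, z⟩
  simp only [closeTriples, mem_preimage, mem_ofPred_eq]
  rw [← sub_self x, dist_sub_right, dist_sub_right, dist_sub_right]

lemma measure_closeTriples {G : Type*} [NormedAddCommGroup G] [MeasurableSpace G] [BorelSpace G]
    [SecondCountableTopology G] (μ : Measure G) [SFinite μ] [μ.IsAddRightInvariant] (r : ℝ) :
    μ.prod (μ.prod μ) (closeTriples r) = μ.prod μ (Prod.mk 0 ⁻¹' closeTriples r) * μ univ := by
  have hS := (isClosed_closeTriples (E := G) r).measurableSet
  have hslice (x : G) : μ.prod μ (Prod.mk x ⁻¹' closeTriples r)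
      = μ.prod μ (Prod.mk 0 ⁻¹' closeTriples r) := by
    rw [preimage_mk_closeTriples]
    exact ((measurePreserving_sub_right μ x).prod
      (measurePreserving_sub_right μ x)).measure_preimage
        (measurable_prodMk_left hS).nullMeasurableSet
  rw [Measure.prod_apply hS]
  simp only [hslice, lintegral_const]

end GeometricGraph

lemma ProbabilityTheory.iIndepFun.map_triple_eq_prod {Ω ι β : Type*} [MeasurableSpace Ω]
    [MeasurableSpace β] {P : Measure Ω} [IsFiniteMeasure P] {X : ι → Ω → β}
    (hmeas : ∀ i, Measurable (X i)) (hindep : iIndepFun X P) {μ : Measure β}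
    (hμ : ∀ i, P.map (X i) = μ) {i j k : ι} (hij : i ≠ j) (hjk : j ≠ k) (hki : k ≠ i) :
    P.map (fun ω => (X i ω, X j ω, X k ω)) = μ.prod (μ.prod μ) := by
  have hjk_law : P.map (fun ω => (X j ω, X k ω)) = μ.prod μ := by
    have h := (indepFun_iff_map_prod_eq_prod_map_map (hmeas j).aemeasurable
      (hmeas k).aemeasurable).1 (hindep.indepFun hjk)
    rwa [hμ, hμ] at h
  have h := (indepFun_iff_map_prod_eq_prod_map_map (hmeas i).aemeasurable
    ((hmeas j).prodMk (hmeas k)).aemeasurable).1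
    (hindep.indepFun_prodMk hmeas j k i hij.symm hki).symm
  rwa [hμ, hjk_law] at h

section RandomGeometricGraph

variable {Ω ι E : Type*} [MeasurableSpace Ω] {P : Measure Ω} [PseudoMetricSpace E]
  [MeasurableSpace E] [OpensMeasurableSpace E] [SecondCountableTopology E] [DecidableEq ι]
  {X : ι → Ω → E}

lemma integrable_rggAdjMatrix_mul_mul_apply [IsFiniteMeasure P] (hmeas : ∀ i, Measurable (X i))
    (r : ℝ) (i j k : ι) :
    Integrable (fun ω => rggAdjMatrix r (X · ω) i j * rggAdjMatrix r (X · ω) j k *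
      rggAdjMatrix r (X · ω) k i) P := by
  simp only [rggAdjMatrix_mul_mul_apply]
  split_ifs
  · exact (integrable_const (1 : ℝ)).indicator ((hmeas i).prodMk ((hmeas j).prodMk (hmeas k))
      (isClosed_closeTriples r).measurableSet)
  · exact integrable_zero _ _ _

lemma integral_rggAdjMatrix_mul_mul_apply [IsFiniteMeasure P]
    (hmeas : ∀ i, Measurable (X i)) (hindep : iIndepFun X P) {μ : Measure E}
    (hμ : ∀ i, P.map (X i) = μ) (r : ℝ) (i j k : ι) :
    ∫ ω, rggAdjMatrix r (X · ω) i j * rggAdjMatrix r (X · ω) j k * rggAdjMatrix r (X · ω) k i ∂P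
      = if i ≠ j ∧ j ≠ k ∧ k ≠ i then (μ.prod (μ.prod μ)).real (closeTriples r) else 0 := by
  simp only [rggAdjMatrix_mul_mul_apply]
  split_ifs with h
  · obtain ⟨hij, hjk, hki⟩ := h
    have hS := (isClosed_closeTriples (E := E) r).measurableSet
    rw [← integral_indicator_one hS, ← hindep.map_triple_eq_prod hmeas hμ hij hjk hki]
    exact (integral_map ((hmeas i).prodMk ((hmeas j).prodMk (hmeas k))).aemeasurable
      (stronglyMeasurable_const.indicator hS).aestronglyMeasurable).symm
  · simp

end RandomGeometricGraph

lemma AddCircle.dist_coe_coe_of_abs_sub_le {T : ℝ} (hT : 0 < T) {x y : ℝ} (h : |x - y| ≤ T / 2) :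
    dist (x : AddCircle T) y = dist x y := by
  rw [dist_eq_norm, ← AddCircle.coe_sub, (AddCircle.norm_coe_eq_abs_iff _ hT.ne').2
    (by rwa [abs_of_pos hT]), Real.dist_eq]

lemma AddCircle.preimage_coe_preimage_mk_zero_closeTriples_inter {T : ℝ} (hT : 0 < T) {r : ℝ}
    (hr : r < T / 4) :
    Prod.map (↑) (↑) ⁻¹' (Prod.mk (0 : AddCircle T) ⁻¹' closeTriples r)
        ∩ Ioc (-(T / 2)) (-(T / 2) + T) ×ˢ Ioc (-(T / 2)) (-(T / 2) + T)
      = Prod.mk (0 : ℝ) ⁻¹' closeTriples r := by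
  have norm_eq {x : ℝ} (h : |x| ≤ T / 2) : ‖(x : AddCircle T)‖ = |x| :=
    (AddCircle.norm_coe_eq_abs_iff _ hT.ne').2 (by rwa [abs_of_pos hT])
  have dist_eq {x y : ℝ} (h : |x - y| ≤ T / 2) : dist (x : AddCircle T) y = |x - y| :=
    (AddCircle.dist_coe_coe_of_abs_sub_le hT h).trans (Real.dist_eq x y)
  ext ⟨y, z⟩
  simp only [closeTriples, mem_inter_iff, mem_preimage, mem_ofPred_eq, Prod.map_apply, mem_prod,
    mem_Ioc, dist_zero_left, dist_zero_right, Real.dist_eq, zero_sub, sub_zero, abs_neg]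
  constructor
  · rintro ⟨⟨hy, hyz, hz⟩, ⟨hy₁, hy₂⟩, hz₁, hz₂⟩
    rw [norm_eq (abs_le.2 ⟨by linarith, by linarith⟩)] at hy
    rw [norm_eq (abs_le.2 ⟨by linarith, by linarith⟩)] at hz
    rw [dist_eq (by linarith [abs_sub y z])] at hyz
    exact ⟨hy, hyz, hz⟩
  · rintro ⟨hy, hyz, hz⟩
    obtain ⟨hy₁, hy₂⟩ := abs_le.1 hy
    obtain ⟨hz₁, hz₂⟩ := abs_le.1 hz
    refine ⟨⟨?_, ?_, ?_⟩, ⟨?_, ?_⟩, ?_, ?_⟩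
    · rwa [norm_eq (by linarith)]
    · rwa [dist_eq (by linarith)]
    · rwa [norm_eq (by linarith)]
    all_goals linarith

lemma AddCircle.volume_preimage_mk_zero_closeTriples {T : ℝ} [hT : Fact (0 < T)] {r : ℝ}
    (hr : r < T / 4) :
    (volume.prod volume : Measure (AddCircle T × AddCircle T))
        (Prod.mk (0 : AddCircle T) ⁻¹' closeTriples r)
      = volume (Prod.mk (0 : ℝ) ⁻¹' closeTriples r) := by
  have hS : MeasurableSet (Prod.mk (0 : AddCircle T) ⁻¹' closeTriples r) :=
    measurable_prodMk_left (isClosed_closeTriples r).measurableSet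
  have mp := AddCircle.measurePreserving_mk T (-(T / 2))
  rw [← (mp.prod mp).measure_preimage hS.nullMeasurableSet, Measure.prod_restrict,
    Measure.restrict_apply ((mp.measurable.prodMap mp.measurable) hS),
    AddCircle.preimage_coe_preimage_mk_zero_closeTriples_inter hT.out hr, Measure.volume_eq_prod]

lemma Real.volume_preimage_mk_preimage_mk_zero_closeTriples (r y : ℝ) :
    volume (Prod.mk y ⁻¹' (Prod.mk (0 : ℝ) ⁻¹' closeTriples r))
      = (Icc (-r) r).indicator (fun y => ENNReal.ofReal (min r (y + r) - max (-r) (y - r))) y := by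
  by_cases hy : y ∈ Icc (-r) r
  · rw [indicator_of_mem hy, ← Real.volume_Icc, ← Icc_inter_Icc]
    congr 1
    ext z
    simp only [closeTriples, mem_preimage, mem_ofPred_eq, Real.dist_eq, mem_inter_iff, mem_Icc,
      abs_le]
    obtain ⟨hy₁, hy₂⟩ := hy
    constructor
    · rintro ⟨-, h₁, h₂⟩
      exact ⟨⟨by linarith, by linarith⟩, by linarith, by linarith⟩
    · rintro ⟨h₁, h₂⟩
      exact ⟨⟨by linarith, by linarith⟩, ⟨by linarith, by linarith⟩, by linarith, by linarith⟩
  · rw [indicator_of_notMem hy, measure_eq_zero_iff_ae_notMem]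
    refine ae_of_all _ fun z hz => hy ?_
    simp only [closeTriples, mem_preimage, mem_ofPred_eq, Real.dist_eq, zero_sub, abs_le] at hz
    exact ⟨by linarith [hz.1.2], by linarith [hz.1.1]⟩

lemma integral_min_add_sub_max_sub {r : ℝ} (hr : 0 ≤ r) :
    ∫ y in (-r)..r, (min r (y + r) - max (-r) (y - r)) = 3 * r ^ 2 := by
  have hcont : Continuous fun y : ℝ => min r (y + r) - max (-r) (y - r) := by fun_prop
  have hleft : ∫ y in (-r)..0, (min r (y + r) - max (-r) (y - r)) = 3 * r ^ 2 / 2 := by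
    rw [intervalIntegral.integral_congr (g := fun y => y + 2 * r) fun y hy => ?_,
      intervalIntegral.integral_comp_add_right (fun x => x), integral_id]
    · ring
    · rw [uIcc_of_le (by linarith), mem_Icc] at hy
      simp only [min_eq_right (by linarith : y + r ≤ r), max_eq_left (by linarith : y - r ≤ -r)]
      ring
  have hright : ∫ y in (0 : ℝ)..r, (min r (y + r) - max (-r) (y - r)) = 3 * r ^ 2 / 2 := by
    rw [intervalIntegral.integral_congr (g := fun y => 2 * r - y) fun y hy => ?_,
      intervalIntegral.integral_comp_sub_left (fun x => x), integral_id]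
    · ring
    · rw [uIcc_of_le hr, mem_Icc] at hy
      simp only [min_eq_left (by linarith : r ≤ y + r), max_eq_right (by linarith : -r ≤ y - r)]
      ring
  rw [← intervalIntegral.integral_add_adjacent_intervals (hcont.intervalIntegrable _ 0)
    (hcont.intervalIntegrable _ _), hleft, hright]
  ring

lemma Real.volume_preimage_mk_zero_closeTriples {r : ℝ} (hr : 0 ≤ r) :
    volume (Prod.mk (0 : ℝ) ⁻¹' closeTriples r) = ENNReal.ofReal (3 * r ^ 2) := by
  have hS : MeasurableSet (Prod.mk (0 : ℝ) ⁻¹' closeTriples r) :=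
    measurable_prodMk_left (isClosed_closeTriples r).measurableSet
  have hnonneg : ∀ y ∈ Icc (-r) r, 0 ≤ min r (y + r) - max (-r) (y - r) := fun y hy =>
    sub_nonneg.2 (max_le (le_min (by linarith) (by linarith [hy.1]))
      (le_min (by linarith [hy.2]) (by linarith)))
  rw [Measure.volume_eq_prod, Measure.prod_apply hS]
  simp only [Real.volume_preimage_mk_preimage_mk_zero_closeTriples]
  rw [lintegral_indicator measurableSet_Icc, ← ofReal_integral_eq_lintegral_ofReal
      (by fun_prop : Continuous fun y : ℝ => min r (y + r) - max (-r) (y - r)).integrableOn_Icc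
      ((ae_restrict_iff' measurableSet_Icc).2 (ae_of_all _ hnonneg)),
    integral_Icc_eq_integral_Ioc, ← intervalIntegral.integral_of_le (by linarith),
    integral_min_add_sub_max_sub hr]

/-- Let `0 < r < 1/4`, `n ≥ 3`, and let `X_1, …, X_n` be i.i.d. uniform points on
the circle `𝕋¹ = ℝ/ℤ = AddCircle 1`.  Let `A(ω)` be the (random) adjacency matrix of
the random geometric graph `G(X; r)`, i.e. `A(ω)_{ij} = 1` iff `i ≠ j` and
`dist(X_i, X_j) ≤ r`.  Then `E[trace(A³)] = 3r²·n(n−1)(n−2)`; equivalently, the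
expected third spectral moment `E[(1/n) trace(A³)]` equals `3r²(n−1)(n−2)`. -/
theorem expected_third_spectral_moment_RGG_one_dim (n : ℕ) (hn : 3 ≤ n) (r : ℝ)
    (hr : 0 < r) (hr' : r < 1 / 4)
    {Ω : Type*} [MeasurableSpace Ω] (P : Measure Ω) [IsProbabilityMeasure P]
    (X : Fin n → Ω → AddCircle (1 : ℝ))
    (hmeas : ∀ i, Measurable (X i))
    (hindep : iIndepFun X P)
    (hunif : ∀ i, P.map (X i) = (volume : Measure (AddCircle (1 : ℝ))))
    (A : Ω → Matrix (Fin n) (Fin n) ℝ)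
    (hA : ∀ ω i j, A ω i j = if i ≠ j ∧ dist (X i ω) (X j ω) ≤ r then 1 else 0) :
    (∫ ω, Matrix.trace (A ω ^ 3) ∂P
        = 3 * r ^ 2 * (n : ℝ) * ((n : ℝ) - 1) * ((n : ℝ) - 2)) ∧
    (∫ ω, (1 / (n : ℝ)) * Matrix.trace (A ω ^ 3) ∂P
        = 3 * r ^ 2 * ((n : ℝ) - 1) * ((n : ℝ) - 2)) := by
  have hA_eq : A = fun ω => rggAdjMatrix r (X · ω) := by
    funext ω; ext i j; simp [hA, rggAdjMatrix]
  have triangle_prob : (volume.prod (volume.prod volume) :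
      Measure (AddCircle (1 : ℝ) × AddCircle (1 : ℝ) × AddCircle (1 : ℝ))).real
        (closeTriples r) = 3 * r ^ 2 := by
    rw [measureReal_def, measure_closeTriples,
      AddCircle.volume_preimage_mk_zero_closeTriples (by linarith),
      Real.volume_preimage_mk_zero_closeTriples hr.le, AddCircle.measure_univ, ENNReal.ofReal_one,
      mul_one, ENNReal.toReal_ofReal (by positivity)]
  have htrace : ∫ ω, (A ω ^ 3).trace ∂P = 3 * r ^ 2 * n * (n - 1) * (n - 2) := by
    rw [hA_eq, integral_trace_pow_three _ (integrable_rggAdjMatrix_mul_mul_apply hmeas r)]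
    simp only [integral_rggAdjMatrix_mul_mul_apply hmeas hindep hunif, triangle_prob]
    rw [sum_sum_sum_ite_pairwise_ne, Fintype.card_fin]
  have hn₀ : (n : ℝ) ≠ 0 := Nat.cast_ne_zero.2 (by omega)
  refine ⟨htrace, ?_⟩
  rw [integral_const_mul, htrace]
  field_simp
end

section
/- Let r > 0 and let x, y ∈ ℝ² (with the Euclidean norm) satisfy ‖x − y‖ = ρ with 0 ≤ ρ ≤ r. Then the area (2-dimensional Lebesgue measure) of the intersection of the closed balls of radius r centered at x and at y equals 2r² · arccos(ρ/(2r)) − (ρ/2) · √(4r² − ρ²). -/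
/-!
Both centres can be moved by an isometry to `(∓ρ/2, 0)`. There, with `c = ρ/2`, the vertical
slice of the lens over abscissa `u` is `v² ≤ r² - (|u| + c)²`, so by Fubini the area is
`∫ 2√(r² - (|u| + c)²) du = 4 ∫_c^r √(r² - t²) dt`, and
`(t√(r² - t²) - r² arccos (t/r)) / 2` is a primitive of `√(r² - t²)`.
-/

open MeasureTheory Metric Real Set

section Translation

variable {G : Type*} [NormedAddCommGroup G] [MeasurableSpace G] [MeasurableAdd G]
  (μ : Measure G) [μ.IsAddLeftInvariant]

theorem measure_closedBall_inter_closedBall_eq_sub (x y : G) (r s : ℝ) :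
    μ (closedBall x r ∩ closedBall y s) = μ (closedBall (x - y) r ∩ closedBall 0 s) := by
  rw [← measure_preimage_add μ y, preimage_inter, preimage_add_closedBall,
    preimage_add_closedBall, sub_self]

end Translation

section Isometry

variable {E : Type*} [NormedAddCommGroup E] [InnerProductSpace ℝ E] [FiniteDimensional ℝ E]
  [MeasurableSpace E] [BorelSpace E]

theorem volume_closedBall_inter_closedBall_zero_eq_of_norm_eq {a b : E} (h : ‖a‖ = ‖b‖)
    (r s : ℝ) :
    volume (closedBall a r ∩ closedBall 0 s) = volume (closedBall b r ∩ closedBall 0 s) := by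
  set e := Submodule.reflection (ℝ ∙ (a - b))ᗮ
  have hpre : e ⁻¹' (closedBall b r ∩ closedBall 0 s) = closedBall a r ∩ closedBall 0 s := by
    rw [preimage_inter, LinearIsometryEquiv.preimage_closedBall,
      LinearIsometryEquiv.preimage_closedBall, map_zero, ← Submodule.reflection_sub h,
      Submodule.reflection_symm, Submodule.reflection_reflection]
  rw [← hpre, e.measurePreserving.measure_preimage
    (isClosed_closedBall.inter isClosed_closedBall).nullMeasurableSet]

theorem volume_closedBall_inter_closedBall_eq_of_dist_eq {x y x' y' : E}
    (h : dist x y = dist x' y') (r s : ℝ) :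
    volume (closedBall x r ∩ closedBall y s) = volume (closedBall x' r ∩ closedBall y' s) := by
  rw [measure_closedBall_inter_closedBall_eq_sub, measure_closedBall_inter_closedBall_eq_sub _ x']
  rw [dist_eq_norm, dist_eq_norm] at h
  exact volume_closedBall_inter_closedBall_zero_eq_of_norm_eq h r s

end Isometry

theorem Real.volume_setOf_sq_le (c : ℝ) :
    volume {v : ℝ | v ^ 2 ≤ c} = ENNReal.ofReal (2 * √c) := by
  rcases le_or_gt 0 c with hc | hc
  · have : {v : ℝ | v ^ 2 ≤ c} = Icc (-√c) √c := by
      ext v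
      rw [mem_ofPred_eq, mem_Icc, ← abs_le, ← sqrt_sq_eq_abs, sqrt_le_sqrt_iff hc]
    rw [this, volume_Icc, two_mul, sub_neg_eq_add]
  · have : {v : ℝ | v ^ 2 ≤ c} = ∅ :=
      eq_empty_of_forall_notMem fun v hv => (sq_nonneg v).not_gt (hv.trans_lt hc)
    rw [this, measure_empty, sqrt_eq_zero'.mpr hc.le, mul_zero, ENNReal.ofReal_zero]

theorem volume_setOf_snd_sq_le {g : ℝ → ℝ} (hg : Measurable g) :
    volume {p : ℝ × ℝ | p.2 ^ 2 ≤ g p.1} = ∫⁻ u, ENNReal.ofReal (2 * √(g u)) := by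
  have hmeas : MeasurableSet {p : ℝ × ℝ | p.2 ^ 2 ≤ g p.1} :=
    measurableSet_le (by fun_prop) (hg.comp measurable_fst)
  rw [Measure.volume_eq_prod, Measure.prod_apply hmeas]
  simp only [preimage_ofPred_eq, Real.volume_setOf_sq_le]

theorem hasDerivAt_mul_sqrt_sq_sub_sq_sub_arccos {r u : ℝ} (hu : |u| < r) :
    HasDerivAt (fun u => (u * √(r ^ 2 - u ^ 2) - r ^ 2 * arccos (u / r)) / 2)
      √(r ^ 2 - u ^ 2) u := by
  have hr : 0 < r := (abs_nonneg u).trans_lt hu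
  obtain ⟨hlo, hhi⟩ := abs_lt.mp hu
  have hpos : 0 < r ^ 2 - u ^ 2 := by nlinarith
  have hsqrt :
      HasDerivAt (fun u => √(r ^ 2 - u ^ 2)) (-(2 * u) / (2 * √(r ^ 2 - u ^ 2))) u := by
    simpa using ((hasDerivAt_pow 2 u).const_sub (r ^ 2)).sqrt hpos.ne'
  have harccos : HasDerivAt (fun u => arccos (u / r)) (-(1 / √(1 - (u / r) ^ 2)) * (1 / r)) u :=
    (hasDerivAt_arccos (by rw [ne_eq, div_eq_iff hr.ne']; linarith)
      (by rw [ne_eq, div_eq_iff hr.ne']; linarith)).comp u ((hasDerivAt_id u).div_const r)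
  have hroot : √(1 - (u / r) ^ 2) = √(r ^ 2 - u ^ 2) / r := by
    rw [show 1 - (u / r) ^ 2 = (r ^ 2 - u ^ 2) / r ^ 2 by field_simp, sqrt_div' _ (sq_nonneg r),
      sqrt_sq hr.le]
  refine ((((hasDerivAt_id' u).mul hsqrt).sub (harccos.const_mul (r ^ 2))).div_const 2
    ).congr_deriv ?_
  rw [hroot]
  have hs : 0 < √(r ^ 2 - u ^ 2) := sqrt_pos.mpr hpos
  field_simp
  rw [sq_sqrt hpos.le]
  ring

theorem integral_sqrt_sq_sub_sq {r a : ℝ} (hr : 0 < r) (ha : -r ≤ a) (har : a ≤ r) :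
    ∫ u in a..r, √(r ^ 2 - u ^ 2) = (r ^ 2 * arccos (a / r) - a * √(r ^ 2 - a ^ 2)) / 2 := by
  rw [intervalIntegral.integral_eq_sub_of_hasDerivAt_of_le har (by fun_prop)
    (fun u hu => hasDerivAt_mul_sqrt_sq_sub_sq_sub_arccos
      (abs_lt.mpr ⟨ha.trans_lt hu.1, hu.2⟩))
    ((by fun_prop : Continuous _).intervalIntegrable _ _)]
  simp only [sub_self, sqrt_zero, mul_zero, div_self hr.ne', arccos_one, zero_div, zero_sub]
  ring

theorem integral_sqrt_sq_sub_abs_add_sq {r c : ℝ} (hr : 0 < r) (hc : -r ≤ c) (hcr : c ≤ r) :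
    ∫ u, 2 * √(r ^ 2 - (|u| + c) ^ 2)
      = 2 * (r ^ 2 * arccos (c / r) - c * √(r ^ 2 - c ^ 2)) := by
  have hvanish : ∀ u ∈ Ioi 0 \ Ioc 0 (r - c), 2 * √(r ^ 2 - (u + c) ^ 2) = 0 := by
    rintro u ⟨hu, hu'⟩
    simp only [mem_Ioi, mem_Ioc, not_and, not_le] at hu hu'
    rw [sqrt_eq_zero'.mpr (by nlinarith [hu' hu]), mul_zero]
  rw [integral_comp_abs (f := fun t => 2 * √(r ^ 2 - (t + c) ^ 2)),
    setIntegral_eq_of_subset_of_forall_sdiff_eq_zero measurableSet_Ioi Ioc_subset_Ioi_self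
      hvanish, ← intervalIntegral.integral_of_le (by linarith),
    intervalIntegral.integral_const_mul,
    intervalIntegral.integral_comp_add_right (fun t => √(r ^ 2 - t ^ 2)), zero_add,
    sub_add_cancel, integral_sqrt_sq_sub_sq hr hc hcr]
  ring

theorem volume_lens {r c : ℝ} (hr : 0 < r) (hc : 0 ≤ c) (hcr : c ≤ r) :
    volume {p : ℝ × ℝ | (p.1 + c) ^ 2 + p.2 ^ 2 ≤ r ^ 2 ∧ (p.1 - c) ^ 2 + p.2 ^ 2 ≤ r ^ 2} =
      ENNReal.ofReal (2 * (r ^ 2 * arccos (c / r) - c * √(r ^ 2 - c ^ 2))) := by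
  have hslices :
      {p : ℝ × ℝ | (p.1 + c) ^ 2 + p.2 ^ 2 ≤ r ^ 2 ∧ (p.1 - c) ^ 2 + p.2 ^ 2 ≤ r ^ 2}
        = {p | p.2 ^ 2 ≤ r ^ 2 - (|p.1| + c) ^ 2} := by
    ext ⟨u, v⟩
    simp only [mem_ofPred_eq]
    rcases abs_cases u with ⟨hu, hu0⟩ | ⟨hu, hu0⟩ <;> rw [hu] <;>
      exact ⟨fun h => by nlinarith [h.1, h.2], fun h => ⟨by nlinarith, by nlinarith⟩⟩
  set f : ℝ → ℝ := fun u => 2 * √(r ^ 2 - (|u| + c) ^ 2)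
  have hf : Integrable f := by
    refine (by fun_prop : Continuous f).integrable_of_hasCompactSupport
      (HasCompactSupport.intro (isCompact_Icc (a := -r) (b := r)) fun u hu => ?_)
    have : r < |u| := by rw [mem_Icc, ← abs_le, not_le] at hu; exact hu
    simp only [f, sqrt_eq_zero'.mpr (by nlinarith : r ^ 2 - (|u| + c) ^ 2 ≤ 0), mul_zero]
  rw [hslices, volume_setOf_snd_sq_le (g := fun u => r ^ 2 - (|u| + c) ^ 2) (by fun_prop),
    ← ofReal_integral_eq_lintegral_ofReal hf (ae_of_all _ fun u => by positivity),
    integral_sqrt_sq_sub_abs_add_sq hr (by linarith) hcr]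

theorem EuclideanSpace.volume_preserving_finTwo :
    MeasurePreserving (fun z : EuclideanSpace ℝ (Fin 2) => (z 0, z 1)) :=
  (volume_preserving_finTwoArrow ℝ).comp
    (EuclideanSpace.volume_preserving_symm_measurableEquiv_toLp (Fin 2))

theorem EuclideanSpace.mem_closedBall_finTwo {z w : EuclideanSpace ℝ (Fin 2)} {r : ℝ}
    (hr : 0 ≤ r) :
    z ∈ closedBall w r ↔ (z 0 - w 0) ^ 2 + (z 1 - w 1) ^ 2 ≤ r ^ 2 := by
  rw [mem_closedBall, EuclideanSpace.dist_eq, Fin.sum_univ_two, Real.dist_eq, Real.dist_eq,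
    sq_abs, sq_abs, sqrt_le_left hr]

theorem EuclideanSpace.volume_closedBall_single_neg_inter_closedBall_single {r c : ℝ}
    (hr : 0 < r) (hc : 0 ≤ c) (hcr : c ≤ r) :
    volume (closedBall (EuclideanSpace.single 0 (-c) : EuclideanSpace ℝ (Fin 2)) r
        ∩ closedBall (EuclideanSpace.single 0 c) r)
      = ENNReal.ofReal (2 * (r ^ 2 * arccos (c / r) - c * √(r ^ 2 - c ^ 2))) := by
  have hpre : closedBall (EuclideanSpace.single 0 (-c) : EuclideanSpace ℝ (Fin 2)) r
        ∩ closedBall (EuclideanSpace.single 0 c) r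
      = (fun z : EuclideanSpace ℝ (Fin 2) => (z 0, z 1)) ⁻¹'
          {p | (p.1 + c) ^ 2 + p.2 ^ 2 ≤ r ^ 2 ∧ (p.1 - c) ^ 2 + p.2 ^ 2 ≤ r ^ 2} := by
    ext z
    simp [EuclideanSpace.mem_closedBall_finTwo hr.le]
  rw [hpre, EuclideanSpace.volume_preserving_finTwo.measure_preimage, volume_lens hr hc hcr]
  exact (by measurability : MeasurableSet _).nullMeasurableSet

/-- If `x, y ∈ ℝ²` (Euclidean norm) satisfy `‖x − y‖ = ρ` with `0 ≤ ρ ≤ r` and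
`r > 0`, then the area of the intersection of the closed balls of radius `r`
centered at `x` and at `y` equals
`2r² · arccos(ρ/(2r)) − (ρ/2) · √(4r² − ρ²)`. -/
theorem area_lens_intersection (r ρ : ℝ) (hr : 0 < r) (hρ0 : 0 ≤ ρ) (hρr : ρ ≤ r)
    (x y : EuclideanSpace ℝ (Fin 2)) (hxy : ‖x - y‖ = ρ) :
    volume (Metric.closedBall x r ∩ Metric.closedBall y r)
      = ENNReal.ofReal
          (2 * r ^ 2 * Real.arccos (ρ / (2 * r)) - ρ / 2 * Real.sqrt (4 * r ^ 2 - ρ ^ 2)) := by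
  have hdist :
      dist (EuclideanSpace.single (0 : Fin 2) (-(ρ / 2))) (EuclideanSpace.single 0 (ρ / 2))
        = dist x y := by
    rw [PiLp.dist_single_same, Real.dist_eq, dist_eq_norm, hxy, abs_of_nonpos (by linarith)]
    ring
  rw [volume_closedBall_inter_closedBall_eq_of_dist_eq hdist.symm,
    EuclideanSpace.volume_closedBall_single_neg_inter_closedBall_single hr (by linarith)
      (by linarith),
    show r ^ 2 - (ρ / 2) ^ 2 = (4 * r ^ 2 - ρ ^ 2) / 2 ^ 2 by ring, sqrt_div' _ (sq_nonneg 2),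
    sqrt_sq zero_le_two, div_div]
  congr 1
  ring
end

section
/- Let G be a simple graph on vertex set {1, …, n} with symmetric 0–1 adjacency matrix A, and let λ_max(A) be the largest eigenvalue of A. Let 0 < β ≤ 1 and 0 < δ ≤ 1 satisfy λ_max(A) < δ/β. Let p : ℕ → [0,1]^n be a trajectory of the epidemic dynamics p_i[k+1] = (1 − ∏_{j ∈ N_i} (1 − β p_j[k])) + (1 − δ) p_i[k] for all i and k, where N_i is the set of neighbors of i in G, and assume p_i[k] ∈ [0,1] for all i and k. Then p_i[k] → 0 as k → ∞, for every i. -/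
/-!
The dynamics is dominated, entry by entry, by its linearisation at the disease-free state:
since `1 - ∏ (1 - aⱼ) ≤ ∑ aⱼ` for `aⱼ ∈ [0, 1]`, we get `0 ≤ p[k+1] ≤ β A p[k] + (1 - δ) p[k]`.
As `A` is symmetric with nonnegative entries, `|xᵀ A x| ≤ |x|ᵀ A |x| ≤ λ_max(A) ‖x‖²`, so the
Euclidean operator norm of `A` is at most `λ_max(A)`. Hence the Euclidean norm of `p[k]`
contracts by the factor `β λ_max(A) + 1 - δ < 1` at every step and tends to `0`.
-/

open Filter Matrix WithLp

theorem Finset.one_sub_prod_one_sub_le_sum {ι R : Type*} [CommRing R] [LinearOrder R]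
    [IsStrictOrderedRing R] (s : Finset ι) (f : ι → R)
    (h0 : ∀ j ∈ s, 0 ≤ f j) (h1 : ∀ j ∈ s, f j ≤ 1) :
    1 - ∏ j ∈ s, (1 - f j) ≤ ∑ j ∈ s, f j := by
  induction s using Finset.cons_induction with
  | empty => simp
  | cons a s _ ih =>
    simp only [Finset.mem_cons, forall_eq_or_imp] at h0 h1
    have hP1 : ∏ j ∈ s, (1 - f j) ≤ 1 :=
      Finset.prod_le_one (fun j hj => sub_nonneg.mpr (h1.2 j hj))
        (fun j hj => sub_le_self 1 (h0.2 j hj))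
    have hfP : f a * ∏ j ∈ s, (1 - f j) ≤ f a := mul_le_of_le_one_right h0.1 hP1
    rw [Finset.prod_cons, Finset.sum_cons]
    linarith [ih h0.2 h1.2]

theorem Matrix.abs_dotProduct_mulVec_le_of_nonneg {n R : Type*} [Fintype n] [CommRing R]
    [LinearOrder R] [IsStrictOrderedRing R] {A : Matrix n n R} (hA : ∀ i j, 0 ≤ A i j)
    (x : n → R) : |x ⬝ᵥ A *ᵥ x| ≤ |x| ⬝ᵥ A *ᵥ |x| := by
  have hrow : ∀ i, |(A *ᵥ x) i| ≤ (A *ᵥ |x|) i := fun i => by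
    simp only [mulVec, dotProduct]
    refine (Finset.abs_sum_le_sum_abs _ _).trans_eq (Finset.sum_congr rfl fun j _ => ?_)
    rw [abs_mul, abs_of_nonneg (hA i j), Pi.abs_apply]
  calc |x ⬝ᵥ A *ᵥ x| ≤ ∑ i, |x i| * |(A *ᵥ x) i| := by
        simpa only [dotProduct, abs_mul] using
          Finset.abs_sum_le_sum_abs (fun i => x i * (A *ᵥ x) i) Finset.univ
    _ ≤ |x| ⬝ᵥ A *ᵥ |x| :=
        Finset.sum_le_sum fun i _ => mul_le_mul_of_nonneg_left (hrow i) (abs_nonneg _)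

namespace Matrix.IsHermitian

variable {n : Type*} [Fintype n] [DecidableEq n] {A : Matrix n n ℝ}

theorem dotProduct_mulVec_le_sSup_spectrum_mul (hA : A.IsHermitian) (x : n → ℝ) :
    x ⬝ᵥ A *ᵥ x ≤ sSup (spectrum ℝ A) * (x ⬝ᵥ x) := by
  set c := sSup (spectrum ℝ A)
  have hpsd : (algebraMap ℝ (Matrix n n ℝ) c - A).PosSemidef := by
    refine posSemidef_iff_isHermitian_and_spectrum_nonneg.mpr
      ⟨(IsSelfAdjoint.algebraMap _ (.all c)).sub hA, ?_⟩
    rw [← spectrum.singleton_sub_eq]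
    rintro _ ⟨_, rfl, μ, hμ, rfl⟩
    exact sub_nonneg.mpr (le_csSup A.finite_real_spectrum.bddAbove hμ)
  have := hpsd.dotProduct_mulVec_nonneg x
  simp only [star_trivial, sub_mulVec, Algebra.algebraMap_eq_smul_one, smul_mulVec, one_mulVec,
    dotProduct_sub, dotProduct_smul, smul_eq_mul] at this
  linarith

theorem norm_toEuclideanCLM_le (hA : A.IsHermitian) {c : ℝ} (hc0 : 0 ≤ c)
    (hc : ∀ x, |x ⬝ᵥ A *ᵥ x| ≤ c * (x ⬝ᵥ x)) : ‖toEuclideanCLM (𝕜 := ℝ) A‖ ≤ c := by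
  rw [ContinuousLinearMap.norm_eq_iSup_rayleighQuotient _ (isSymmetric_toEuclideanLin_iff.mpr hA)]
  refine ciSup_le fun x => ?_
  rw [ContinuousLinearMap.rayleighQuotient, ContinuousLinearMap.reApplyInnerSelf_apply,
    RCLike.re_to_real, real_inner_comm, inner_toEuclideanCLM, abs_div, abs_sq]
  refine div_le_of_le_mul₀ (sq_nonneg _) hc0 ?_
  rw [EuclideanSpace.real_norm_sq_eq]
  simpa only [dotProduct, sq] using hc (ofLp x)

theorem norm_toEuclideanCLM_le_sSup_spectrum [Nonempty n] (hA : A.IsHermitian)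
    (hA0 : ∀ i j, 0 ≤ A i j) : ‖toEuclideanCLM (𝕜 := ℝ) A‖ ≤ sSup (spectrum ℝ A) := by
  have hc : ∀ x, |x ⬝ᵥ A *ᵥ x| ≤ sSup (spectrum ℝ A) * (x ⬝ᵥ x) := fun x => by
    have habs : |x| ⬝ᵥ |x| = x ⬝ᵥ x := by simp only [dotProduct, Pi.abs_apply, abs_mul_abs_self]
    simpa only [habs] using (abs_dotProduct_mulVec_le_of_nonneg hA0 x).trans
      (hA.dotProduct_mulVec_le_sSup_spectrum_mul |x|)
  obtain ⟨i⟩ := ‹Nonempty n›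
  have hc0 : 0 ≤ sSup (spectrum ℝ A) := by
    simpa using (abs_nonneg _).trans (hc (Pi.single i 1))
  exact hA.norm_toEuclideanCLM_le hc0 hc

end Matrix.IsHermitian

theorem EuclideanSpace.norm_le_norm_of_abs_le {n : Type*} [Fintype n]
    {x y : EuclideanSpace ℝ n} (h : ∀ i, |x i| ≤ |y i|) : ‖x‖ ≤ ‖y‖ := by
  rw [← sq_le_sq₀ (norm_nonneg x) (norm_nonneg y), EuclideanSpace.real_norm_sq_eq,
    EuclideanSpace.real_norm_sq_eq]
  exact Finset.sum_le_sum fun i _ => sq_le_sq.mpr (h i)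

theorem tendsto_zero_of_le_mul_of_lt_one {u : ℕ → ℝ} {r : ℝ} (hu : ∀ k, 0 ≤ u k)
    (hr0 : 0 ≤ r) (hr1 : r < 1) (h : ∀ k, u (k + 1) ≤ r * u k) :
    Tendsto u atTop (nhds 0) :=
  squeeze_zero hu (fun k => le_geom hr0 k fun m _ => h m) <| by
    simpa using (tendsto_pow_atTop_nhds_zero_of_lt_one hr0 hr1).mul_const (u 0)

section Epidemic

variable {V : Type*} [Fintype V] {G : SimpleGraph V} [DecidableRel G.Adj] {β δ : ℝ}
  {p : ℕ → V → ℝ}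

theorem epidemic_step_le_linearization (hβ0 : 0 ≤ β) (hβ1 : β ≤ 1)
    (hp : ∀ k i, p k i ∈ Set.Icc (0 : ℝ) 1)
    (hdyn : ∀ k i, p (k + 1) i =
      (1 - ∏ j ∈ G.neighborFinset i, (1 - β * p k j)) + (1 - δ) * p k i) (k : ℕ) (i : V) :
    p (k + 1) i ≤ β * (G.adjMatrix ℝ *ᵥ p k) i + (1 - δ) * p k i := by
  rw [hdyn, SimpleGraph.adjMatrix_mulVec_apply, Finset.mul_sum]
  gcongr
  exact Finset.one_sub_prod_one_sub_le_sum _ _ (fun j _ => mul_nonneg hβ0 (hp k j).1)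
    (fun j _ => mul_le_one₀ hβ1 (hp k j).1 (hp k j).2)

theorem norm_epidemic_step_le [DecidableEq V] (hβ0 : 0 ≤ β) (hβ1 : β ≤ 1) (hδ1 : δ ≤ 1)
    (hp : ∀ k i, p k i ∈ Set.Icc (0 : ℝ) 1)
    (hdyn : ∀ k i, p (k + 1) i =
      (1 - ∏ j ∈ G.neighborFinset i, (1 - β * p k j)) + (1 - δ) * p k i) (k : ℕ) :
    ‖toLp 2 (p (k + 1))‖ ≤
      (β * ‖toEuclideanCLM (𝕜 := ℝ) (G.adjMatrix ℝ)‖ + (1 - δ)) * ‖toLp 2 (p k)‖ := by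
  set T := toEuclideanCLM (𝕜 := ℝ) (G.adjMatrix ℝ)
  set q := toLp 2 (p k)
  have hlin : ∀ i, (β • T q + (1 - δ) • q) i = β * (G.adjMatrix ℝ *ᵥ p k) i + (1 - δ) * p k i :=
    fun i => rfl
  calc ‖toLp 2 (p (k + 1))‖ ≤ ‖β • T q + (1 - δ) • q‖ := by
        refine EuclideanSpace.norm_le_norm_of_abs_le fun i => ?_
        have hstep := epidemic_step_le_linearization hβ0 hβ1 hp hdyn k i
        rw [hlin, abs_of_nonneg (hp (k + 1) i).1, abs_of_nonneg ((hp (k + 1) i).1.trans hstep)]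
        exact hstep
    _ ≤ β * ‖T q‖ + (1 - δ) * ‖q‖ := by
        grw [norm_add_le, norm_smul, norm_smul, Real.norm_of_nonneg hβ0,
          Real.norm_of_nonneg (sub_nonneg.mpr hδ1)]
    _ ≤ β * (‖T‖ * ‖q‖) + (1 - δ) * ‖q‖ := by grw [T.le_opNorm q]
    _ = (β * ‖T‖ + (1 - δ)) * ‖q‖ := by ring

end Epidemic

theorem epidemic_dies_out_of_spectral_condition_general (n : ℕ) (G : SimpleGraph (Fin n))
    [DecidableRel G.Adj] (β δ : ℝ) (hβ0 : 0 < β) (hβ1 : β ≤ 1)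
    (hδ1 : δ ≤ 1)
    (hspec : sSup (spectrum ℝ (G.adjMatrix ℝ)) < δ / β)
    (p : ℕ → Fin n → ℝ)
    (hp : ∀ k i, p k i ∈ Set.Icc (0 : ℝ) 1)
    (hdyn : ∀ k i, p (k + 1) i =
      (1 - ∏ j ∈ G.neighborFinset i, (1 - β * p k j)) + (1 - δ) * p k i) :
    ∀ i, Tendsto (fun k => p k i) atTop (nhds 0) := by
  intro i
  have : Nonempty (Fin n) := ⟨i⟩
  set T := toEuclideanCLM (𝕜 := ℝ) (G.adjMatrix ℝ)
  have hT : ‖T‖ ≤ sSup (spectrum ℝ (G.adjMatrix ℝ)) :=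
    (G.isHermitian_adjMatrix ℝ).norm_toEuclideanCLM_le_sSup_spectrum fun a b => by
      rw [SimpleGraph.adjMatrix_apply]; split_ifs <;> norm_num
  have hr1 : β * ‖T‖ + (1 - δ) < 1 := by
    have := (lt_div_iff₀ hβ0).mp (hT.trans_lt hspec)
    linarith
  have hr0 : 0 ≤ β * ‖T‖ + (1 - δ) :=
    add_nonneg (mul_nonneg hβ0.le (norm_nonneg T)) (sub_nonneg.mpr hδ1)
  have hnorm := tendsto_zero_of_le_mul_of_lt_one (u := fun k => ‖toLp 2 (p k)‖)
    (fun k => norm_nonneg _) hr0 hr1 (norm_epidemic_step_le hβ0.le hβ1 hδ1 hp hdyn)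
  exact squeeze_zero_norm (fun k => PiLp.norm_apply_le (toLp 2 (p k)) i) hnorm

/-- Let `G` be a simple graph on `{1, …, n}` with 0–1 adjacency matrix
`A = G.adjMatrix ℝ` and largest adjacency eigenvalue
`λ_max(A) = sSup (spectrum ℝ A)`.  Let `0 < β ≤ 1` and `0 < δ ≤ 1` satisfy
`λ_max(A) < δ/β`.  If `p : ℕ → [0,1]^n` is a trajectory of the epidemic dynamics
`p_i[k+1] = (1 − ∏_{j ∈ N_i} (1 − β p_j[k])) + (1 − δ) p_i[k]`, then
`p_i[k] → 0` as `k → ∞` for every node `i`. -/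
theorem epidemic_dies_out_of_spectral_condition (n : ℕ) (G : SimpleGraph (Fin n))
    [DecidableRel G.Adj] (β δ : ℝ) (hβ0 : 0 < β) (hβ1 : β ≤ 1)
    (hδ0 : 0 < δ) (hδ1 : δ ≤ 1)
    (hspec : sSup (spectrum ℝ (G.adjMatrix ℝ)) < δ / β)
    (p : ℕ → Fin n → ℝ)
    (hp : ∀ k i, p k i ∈ Set.Icc (0 : ℝ) 1)
    (hdyn : ∀ k i, p (k + 1) i =
      (1 - ∏ j ∈ G.neighborFinset i, (1 - β * p k j)) + (1 - δ) * p k i) :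
    ∀ i, Tendsto (fun k => p k i) atTop (nhds 0) :=
  epidemic_dies_out_of_spectral_condition_general n G β δ hβ0 hβ1 hδ1 hspec p hp hdyn
end
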